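/- (Uniform comparability of the Prüfer radius.) Let b > 0 and H(x) = diag(1/2 + g(x), 1/2 - g(x)) with g : [0,b] → ℝ integrable, |g| ≤ 1/2 a.e. Suppose there exist [a,c] ⊂ (0,b] and δ > 0 such that g restricted to [a,c] is absolutely continuous with integrable derivative and |g(x)| ≤ 1/2 - δ on [a,c]. Then there exists C ≥ 1, independent of λ, such that for every λ ∈ ℝ and every x ∈ [a,c], C⁻¹·‖u(λ,a)‖ ≤ ‖u(λ,x)‖ ≤ C·‖u(λ,a)‖, where ‖·‖ is the Euclidean norm on ℝ² and u(λ,·) is the solution of the canonical system. -/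

import Mathlib

open MeasureTheory Matrix Set

noncomputable section

/-- The symplectic matrix 𝒥 = [[0,-1],[1,0]] over ℝ. -/
def J2 : Matrix (Fin 2) (Fin 2) ℝ := !![0, -1; 1, 0]

/-- The symplectic matrix 𝒥 = [[0,-1],[1,0]] over ℂ. -/
def J2C : Matrix (Fin 2) (Fin 2) ℂ := !![0, -1; 1, 0]

/-- Complexification of a real 2×2 matrix. -/
def cmat (M : Matrix (Fin 2) (Fin 2) ℝ) : Matrix (Fin 2) (Fin 2) ℂ :=
  M.map Complex.ofReal

open Filter Topology

/-! The energy `E = ⟨H u, u⟩` is comparable to `‖u‖²` on `[a, c]`, where `H ≥ δ`. Along a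
solution, `E' = g' (u₀² - u₁²)`: the terms carrying `λ` cancel because `⟨H u, 𝒥 H u⟩ = 0`.
Hence `|E'| ≤ δ⁻¹ |g'| E` almost everywhere, and Grönwall's inequality for absolutely continuous
functions bounds `E x` and `E a` by `exp (∫ₐᶜ δ⁻¹ |g'|)` times each other, independently of `λ`. -/

theorem absolutelyContinuousOnInterval_const {X : Type*} [PseudoMetricSpace X] (x : X) (a b : ℝ) :
    AbsolutelyContinuousOnInterval (fun _ => x) a b :=
  (LipschitzWith.const x).lipschitzOnWith.absolutelyContinuousOnInterval

theorem AbsolutelyContinuousOnInterval.congr {X : Type*} [PseudoMetricSpace X] {f g : ℝ → X}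
    {a b : ℝ} (hf : AbsolutelyContinuousOnInterval f a b) (h : EqOn f g (uIcc a b)) :
    AbsolutelyContinuousOnInterval g a b := by
  refine Tendsto.congr' ?_ hf
  filter_upwards [mem_inf_of_right (mem_principal_self _)] with E hE
  exact Finset.sum_congr rfl fun i hi => by rw [h (hE.1 i hi).1, h (hE.1 i hi).2]

theorem LipschitzOnWith.comp_absolutelyContinuousOnInterval {X Y : Type*} [PseudoMetricSpace X]
    [PseudoMetricSpace Y] {φ : X → Y} {f : ℝ → X} {K : NNReal} {s : Set X} {a b : ℝ}
    (hφ : LipschitzOnWith K φ s) (hf : AbsolutelyContinuousOnInterval f a b)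
    (hfs : MapsTo f (uIcc a b) s) : AbsolutelyContinuousOnInterval (φ ∘ f) a b := by
  unfold AbsolutelyContinuousOnInterval at hf ⊢
  refine squeeze_zero' (Eventually.of_forall fun _ => Finset.sum_nonneg fun _ _ => dist_nonneg)
    ?_ (by simpa using hf.const_mul (K : ℝ))
  filter_upwards [mem_inf_of_right (mem_principal_self _)] with E hE
  rw [Finset.mul_sum]
  exact Finset.sum_le_sum fun i hi =>
    hφ.dist_le_mul _ (hfs (hE.1 i hi).1) _ (hfs (hE.1 i hi).2)

theorem ContDiff.comp_absolutelyContinuousOnInterval {φ f : ℝ → ℝ} {a b : ℝ}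
    (hφ : ContDiff ℝ 1 φ) (hf : AbsolutelyContinuousOnInterval f a b) :
    AbsolutelyContinuousOnInterval (φ ∘ f) a b := by
  obtain ⟨C, hC⟩ := hf.exists_bound
  obtain ⟨K, hK⟩ := hφ.contDiffOn.exists_lipschitzOnWith one_ne_zero (convex_Icc (-C) C)
    isCompact_Icc
  exact hK.comp_absolutelyContinuousOnInterval hf fun x hx => abs_le.mp (hC x hx)

theorem IntervalIntegrable.absolutelyContinuousOnInterval_of_eq_add_integral {f f' : ℝ → ℝ}
    {a b : ℝ} (hf' : IntervalIntegrable f' volume a b)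
    (hf : ∀ x ∈ uIcc a b, f x = f a + ∫ t in a..x, f' t) :
    AbsolutelyContinuousOnInterval f a b ∧ ∀ᵐ x, x ∈ uIcc a b → HasDerivAt f (f' x) x := by
  refine ⟨?_, ?_⟩
  · refine (AbsolutelyContinuousOnInterval.fun_add ?_
      (hf'.absolutelyContinuousOnInterval_intervalIntegral left_mem_uIcc)).congr
      fun x hx => (hf x hx).symm
    exact absolutelyContinuousOnInterval_const (f a) a b
  · have hmin : ∀ᵐ x : ℝ, x ≠ min a b := by simp [ae_iff, measure_singleton]
    have hmax : ∀ᵐ x : ℝ, x ≠ max a b := by simp [ae_iff, measure_singleton]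
    filter_upwards [hf'.ae_hasDerivAt_integral, hmin, hmax] with x hx hxa hxb hxI
    refine ((hx hxI a left_mem_uIcc).const_add (f a)).congr_of_eventuallyEq ?_
    filter_upwards [Icc_mem_nhds (lt_of_le_of_ne hxI.1 (Ne.symm hxa)) (lt_of_le_of_ne hxI.2 hxb)]
      with y hy using hf y hy

theorem AbsolutelyContinuousOnInterval.monotoneOn_of_ae_deriv_nonneg {f : ℝ → ℝ} {a b : ℝ}
    (hf : AbsolutelyContinuousOnInterval f a b) (hf' : ∀ᵐ x, x ∈ uIcc a b → 0 ≤ deriv f x) :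
    MonotoneOn f (uIcc a b) := by
  intro x hx y hy hxy
  have hsub : uIcc x y ⊆ uIcc a b := uIcc_subset_uIcc hx hy
  have h := (hf.mono hsub).integral_deriv_eq_sub
  have : 0 ≤ ∫ t in x..y, deriv f t := by
    refine intervalIntegral.integral_nonneg_of_ae_restrict hxy ?_
    rw [EventuallyLE, ae_restrict_iff' measurableSet_Icc]
    filter_upwards [hf'] with t ht htI using ht (hsub (Icc_subset_uIcc htI))
  linarith

theorem AbsolutelyContinuousOnInterval.monotoneOn_mul_exp_integral {E k : ℝ → ℝ} {a b : ℝ}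
    (hE : AbsolutelyContinuousOnInterval E a b) (hk : IntervalIntegrable k volume a b)
    (hEk : ∀ᵐ x, x ∈ uIcc a b → 0 ≤ deriv E x + k x * E x) :
    MonotoneOn (fun x => E x * Real.exp (∫ t in a..x, k t)) (uIcc a b) := by
  have hΦ := hk.absolutelyContinuousOnInterval_intervalIntegral left_mem_uIcc
  refine AbsolutelyContinuousOnInterval.monotoneOn_of_ae_deriv_nonneg
    (hE.fun_mul (Real.contDiff_exp.comp_absolutelyContinuousOnInterval hΦ)) ?_
  filter_upwards [hE.ae_differentiableAt, hk.ae_hasDerivAt_integral, hEk] with x hEx hΦx hx hxI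
  rw [((hEx hxI).hasDerivAt.fun_mul (hΦx hxI a left_mem_uIcc).exp).deriv]
  linarith [mul_nonneg (Real.exp_pos (∫ t in a..x, k t)).le (hx hxI)]

theorem AbsolutelyContinuousOnInterval.le_exp_integral_mul {E k : ℝ → ℝ} {a b : ℝ}
    (hE : AbsolutelyContinuousOnInterval E a b) (hk : IntervalIntegrable k volume a b)
    (hEk : ∀ᵐ x, x ∈ uIcc a b → |deriv E x| ≤ k x * E x) {x : ℝ} (hx : x ∈ Icc a b) :
    E x ≤ Real.exp (∫ t in a..x, k t) * E a ∧ E a ≤ Real.exp (∫ t in a..x, k t) * E x := by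
  have hxI : x ∈ uIcc a b := Icc_subset_uIcc hx
  have hgrow := hE.monotoneOn_mul_exp_integral hk (by
    filter_upwards [hEk] with t ht htI
    linarith [neg_abs_le (deriv E t), ht htI]) left_mem_uIcc hxI hx.1
  have hdecay := hE.fun_neg.monotoneOn_mul_exp_integral hk.neg (by
    filter_upwards [hEk] with t ht htI
    rw [deriv.fun_neg, Pi.neg_apply]
    linarith [le_abs_self (deriv E t), ht htI]) left_mem_uIcc hxI hx.1
  simp only [intervalIntegral.integral_same, Real.exp_zero, mul_one, Pi.neg_apply,
    intervalIntegral.integral_neg, Real.exp_neg] at hgrow hdecay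
  have := Real.exp_pos (∫ t in a..x, k t)
  constructor
  · rw [neg_mul, neg_le_neg_iff, mul_inv_le_iff₀ this] at hdecay
    linarith
  · linarith

theorem J2_mul_diagonal_mulVec (p q : ℝ) (v : Fin 2 → ℝ) :
    (J2 * !![p, 0; 0, q]) *ᵥ v = ![-(q * v 1), p * v 0] := by
  ext i
  fin_cases i <;> simp [J2, mulVec, dotProduct, Fin.sum_univ_two]

theorem eq_add_integral_of_canonical_system {b lam : ℝ} {g : ℝ → ℝ}
    {H : ℝ → Matrix (Fin 2) (Fin 2) ℝ} {u : ℝ → Fin 2 → ℝ}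
    (hH : ∀ x, H x = !![1/2 + g x, 0; 0, 1/2 - g x])
    (hV₀ : IntegrableOn (fun s => (1/2 - g s) * u s 1) (Icc 0 b))
    (hV₁ : IntegrableOn (fun s => (1/2 + g s) * u s 0) (Icc 0 b))
    (hueq : ∀ x ∈ Icc (0:ℝ) b, u x = ![1, 0] + lam • ∫ s in (0:ℝ)..x, (J2 * H s) *ᵥ u s)
    {x : ℝ} (hx : x ∈ Icc 0 b) :
    u x 0 = u 0 0 + ∫ s in 0..x, -lam * (1/2 - g s) * u s 1 ∧
    u x 1 = u 0 1 + ∫ s in 0..x, lam * (1/2 + g s) * u s 0 := by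
  have hu0 : u 0 = ![1, 0] := by simpa using hueq 0 ⟨le_rfl, hx.1.trans hx.2⟩
  have hsub : Ioc 0 x ⊆ Icc 0 b := Ioc_subset_Icc_self.trans (Icc_subset_Icc_right hx.2)
  have hint : ∀ i, IntegrableOn (fun s => ((J2 * H s) *ᵥ u s) i) (Ioc 0 x) := by
    intro i
    simp only [hH, J2_mul_diagonal_mulVec]
    fin_cases i
    · exact hV₀.neg.mono_set hsub
    · exact hV₁.mono_set hsub
  simp only [hueq x hx, hu0, intervalIntegral.integral_of_le hx.1]
  refine ⟨?_, ?_⟩ <;>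
  · rw [Pi.add_apply, Pi.smul_apply, smul_eq_mul, eval_integral hint, ← integral_const_mul]
    simp only [hH, J2_mul_diagonal_mulVec]
    congr 1
    refine integral_congr_ae (.of_forall fun s => ?_)
    simp only [Matrix.cons_val_zero, Matrix.cons_val_one]
    ring

theorem canonical_system_hasDerivAt {b lam : ℝ} {g : ℝ → ℝ}
    {H : ℝ → Matrix (Fin 2) (Fin 2) ℝ} {u : ℝ → Fin 2 → ℝ} (hb : 0 ≤ b)
    (hgint : IntegrableOn g (Icc 0 b)) (hH : ∀ x, H x = !![1/2 + g x, 0; 0, 1/2 - g x])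
    (hu : ContinuousOn u (Icc 0 b))
    (hueq : ∀ x ∈ Icc (0:ℝ) b, u x = ![1, 0] + lam • ∫ s in (0:ℝ)..x, (J2 * H s) *ᵥ u s) :
    (AbsolutelyContinuousOnInterval (fun x => u x 0) 0 b ∧
      ∀ᵐ x, x ∈ uIcc 0 b → HasDerivAt (fun x => u x 0) (-lam * (1/2 - g x) * u x 1) x) ∧
    (AbsolutelyContinuousOnInterval (fun x => u x 1) 0 b ∧
      ∀ᵐ x, x ∈ uIcc 0 b → HasDerivAt (fun x => u x 1) (lam * (1/2 + g x) * u x 0) x) := by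
  have hcomp : ∀ i, ContinuousOn (fun s => u s i) (Icc 0 b) :=
    fun i => (continuous_apply i).comp_continuousOn hu
  have hconst : IntegrableOn (fun _ => (1/2 : ℝ)) (Icc 0 b) :=
    integrableOn_const measure_Icc_lt_top.ne
  have hV₀ : IntegrableOn (fun s => (1/2 - g s) * u s 1) (Icc 0 b) :=
    (hconst.sub hgint).mul_continuousOn (hcomp 1) isCompact_Icc
  have hV₁ : IntegrableOn (fun s => (1/2 + g s) * u s 0) (Icc 0 b) :=
    (hconst.add hgint).mul_continuousOn (hcomp 0) isCompact_Icc
  have hrep (x : ℝ) (hx : x ∈ uIcc 0 b) :=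
    eq_add_integral_of_canonical_system hH hV₀ hV₁ hueq (by rwa [uIcc_of_le hb] at hx)
  rw [← uIcc_of_le hb] at hV₀ hV₁
  exact ⟨IntervalIntegrable.absolutelyContinuousOnInterval_of_eq_add_integral
      (by simpa only [mul_assoc] using IntegrableOn.intervalIntegrable (hV₀.const_mul (-lam)))
      fun x hx => (hrep x hx).1,
    IntervalIntegrable.absolutelyContinuousOnInterval_of_eq_add_integral
      (by simpa only [mul_assoc] using IntegrableOn.intervalIntegrable (hV₁.const_mul lam))
      fun x hx => (hrep x hx).2⟩

/-- `⟨H v, v⟩` for `H = diag(1/2 + g, 1/2 - g)` and `v = (v₀, v₁)`. -/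
def energy (g v₀ v₁ : ℝ → ℝ) (x : ℝ) : ℝ :=
  (1/2 + g x) * v₀ x ^ 2 + (1/2 - g x) * v₁ x ^ 2

theorem hasDerivAt_energy {g v₀ v₁ : ℝ → ℝ} {g' lam x : ℝ} (hg : HasDerivAt g g' x)
    (hv₀ : HasDerivAt v₀ (-lam * (1/2 - g x) * v₁ x) x)
    (hv₁ : HasDerivAt v₁ (lam * (1/2 + g x) * v₀ x) x) :
    HasDerivAt (energy g v₀ v₁) (g' * (v₀ x ^ 2 - v₁ x ^ 2)) x := by
  refine HasDerivAt.congr_deriv (f := energy g v₀ v₁) (((hg.const_add (1/2)).fun_mul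
    (hv₀.fun_pow 2)).fun_add ((hg.const_sub (1/2)).fun_mul (hv₁.fun_pow 2))) ?_
  simp only [Nat.cast_ofNat, Nat.add_one_sub_one, pow_one]
  ring

theorem mul_sum_sq_le_energy {g v₀ v₁ : ℝ → ℝ} {δ x : ℝ} (hg : |g x| ≤ 1/2 - δ) :
    δ * (v₀ x ^ 2 + v₁ x ^ 2) ≤ energy g v₀ v₁ x := by
  obtain ⟨h₁, h₂⟩ := abs_le.mp hg
  unfold energy
  nlinarith [sq_nonneg (v₀ x), sq_nonneg (v₁ x)]

theorem energy_le_sum_sq {g v₀ v₁ : ℝ → ℝ} {x : ℝ} (hg : |g x| ≤ 1/2) :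
    energy g v₀ v₁ x ≤ v₀ x ^ 2 + v₁ x ^ 2 := by
  obtain ⟨h₁, h₂⟩ := abs_le.mp hg
  unfold energy
  nlinarith [sq_nonneg (v₀ x), sq_nonneg (v₁ x)]

theorem absolutelyContinuousOnInterval_energy {g v₀ v₁ : ℝ → ℝ} {a b : ℝ}
    (hg : AbsolutelyContinuousOnInterval g a b) (hv₀ : AbsolutelyContinuousOnInterval v₀ a b)
    (hv₁ : AbsolutelyContinuousOnInterval v₁ a b) :
    AbsolutelyContinuousOnInterval (energy g v₀ v₁) a b := by
  have hc := absolutelyContinuousOnInterval_const (1/2 : ℝ) a b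
  have h := ((hc.fun_add hg).fun_mul (hv₀.fun_mul hv₀)).fun_add
    ((hc.fun_sub hg).fun_mul (hv₁.fun_mul hv₁))
  simp only [← sq] at h
  exact h

theorem sum_sq_le_exp_integral_div_mul {g g' v₀ v₁ : ℝ → ℝ} {lam a c δ : ℝ} (hδ : 0 < δ)
    (hg : AbsolutelyContinuousOnInterval g a c) (hv₀ : AbsolutelyContinuousOnInterval v₀ a c)
    (hv₁ : AbsolutelyContinuousOnInterval v₁ a c) (hg'int : IntervalIntegrable g' volume a c)
    (hg' : ∀ᵐ x, x ∈ uIcc a c → HasDerivAt g (g' x) x)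
    (hv₀' : ∀ᵐ x, x ∈ uIcc a c → HasDerivAt v₀ (-lam * (1/2 - g x) * v₁ x) x)
    (hv₁' : ∀ᵐ x, x ∈ uIcc a c → HasDerivAt v₁ (lam * (1/2 + g x) * v₀ x) x)
    (hgδ : ∀ x ∈ Icc a c, |g x| ≤ 1/2 - δ) {x : ℝ} (hx : x ∈ Icc a c) :
    v₀ x ^ 2 + v₁ x ^ 2 ≤ Real.exp (∫ t in a..c, δ⁻¹ * |g' t|) / δ * (v₀ a ^ 2 + v₁ a ^ 2) ∧
    v₀ a ^ 2 + v₁ a ^ 2 ≤ Real.exp (∫ t in a..c, δ⁻¹ * |g' t|) / δ * (v₀ x ^ 2 + v₁ x ^ 2) := by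
  have hac : a ≤ c := hx.1.trans hx.2
  have ha : a ∈ Icc a c := ⟨le_rfl, hac⟩
  have hk : IntervalIntegrable (fun t => δ⁻¹ * |g' t|) volume a c := hg'int.abs.const_mul δ⁻¹
  have hEk : ∀ᵐ t, t ∈ uIcc a c →
      |deriv (energy g v₀ v₁) t| ≤ δ⁻¹ * |g' t| * energy g v₀ v₁ t := by
    filter_upwards [hg', hv₀', hv₁'] with t hgt hv₀t hv₁t htI
    rw [(hasDerivAt_energy (hgt htI) (hv₀t htI) (hv₁t htI)).deriv, abs_mul]
    have htI' : t ∈ Icc a c := uIcc_of_le hac ▸ htI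
    have hsq : |v₀ t ^ 2 - v₁ t ^ 2| ≤ δ⁻¹ * energy g v₀ v₁ t := by
      have h : |v₀ t ^ 2 - v₁ t ^ 2| ≤ v₀ t ^ 2 + v₁ t ^ 2 :=
        abs_le.mpr ⟨by linarith [sq_nonneg (v₀ t)], by linarith [sq_nonneg (v₁ t)]⟩
      rw [le_inv_mul_iff₀ hδ]
      exact (mul_le_mul_of_nonneg_left h hδ.le).trans (mul_sum_sq_le_energy (hgδ t htI'))
    calc |g' t| * |v₀ t ^ 2 - v₁ t ^ 2| ≤ |g' t| * (δ⁻¹ * energy g v₀ v₁ t) := by gcongr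
      _ = δ⁻¹ * |g' t| * energy g v₀ v₁ t := by ring
  have hΦ : ∫ t in a..x, δ⁻¹ * |g' t| ≤ ∫ t in a..c, δ⁻¹ * |g' t| :=
    intervalIntegral.integral_mono_interval le_rfl hx.1 hx.2
      (.of_forall fun t => by positivity) hk
  have hexp := Real.exp_le_exp.mpr hΦ
  have hδa := mul_sum_sq_le_energy (v₀ := v₀) (v₁ := v₁) (hgδ a ha)
  have hδx := mul_sum_sq_le_energy (v₀ := v₀) (v₁ := v₁) (hgδ x hx)
  have hEa := energy_le_sum_sq (v₀ := v₀) (v₁ := v₁) ((hgδ a ha).trans (by linarith))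
  have hEx := energy_le_sum_sq (v₀ := v₀) (v₁ := v₁) ((hgδ x hx).trans (by linarith))
  obtain ⟨hgrow, hdecay⟩ :=
    (absolutelyContinuousOnInterval_energy hg hv₀ hv₁).le_exp_integral_mul hk hEk hx
  rw [div_mul_eq_mul_div, div_mul_eq_mul_div, le_div_iff₀ hδ, le_div_iff₀ hδ]
  constructor <;> nlinarith [sq_nonneg (v₀ x), sq_nonneg (v₁ x), sq_nonneg (v₀ a),
    sq_nonneg (v₁ a), Real.exp_pos (∫ t in a..x, δ⁻¹ * |g' t|)]

theorem sqrt_comparable_of_le_mul {S T D : ℝ} (hD : 0 < D) (hS : S ≤ D * T) (hT : T ≤ D * S) :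
    (√D)⁻¹ * √T ≤ √S ∧ √S ≤ √D * √T := by
  refine ⟨?_, ?_⟩
  · rw [inv_mul_le_iff₀ (Real.sqrt_pos.mpr hD), ← Real.sqrt_mul hD.le]
    exact Real.sqrt_le_sqrt hT
  · rw [← Real.sqrt_mul hD.le]
    exact Real.sqrt_le_sqrt hS

theorem pruefer_radius_comparable_general
    (b : ℝ) (hb : 0 < b)
    (g : ℝ → ℝ)
    (hgint : IntegrableOn g (Icc 0 b))
    (H : ℝ → Matrix (Fin 2) (Fin 2) ℝ)
    (hH : ∀ x, H x = !![1/2 + g x, 0; 0, 1/2 - g x])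
    (a c δ : ℝ) (ha : 0 < a) (hac : a < c) (hcb : c ≤ b) (hδ : 0 < δ)
    (gd : ℝ → ℝ) (hgdint : IntegrableOn gd (Icc a c))
    (hgAC : ∀ x ∈ Icc a c, g x = g a + ∫ s in a..x, gd s)
    (hgbd2 : ∀ x ∈ Icc a c, |g x| ≤ 1/2 - δ)
    (u : ℝ → ℝ → Fin 2 → ℝ)
    (hucont : ∀ lam, ContinuousOn (u lam) (Icc 0 b))
    (hueq : ∀ lam : ℝ, ∀ x ∈ Icc (0:ℝ) b,
      u lam x = ![1, 0] + lam • ∫ s in (0:ℝ)..x, (J2 * H s) *ᵥ u lam s) :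
    ∃ C : ℝ, 1 ≤ C ∧ ∀ lam : ℝ, ∀ x ∈ Icc a c,
      C⁻¹ * Real.sqrt ((u lam a 0)^2 + (u lam a 1)^2)
          ≤ Real.sqrt ((u lam x 0)^2 + (u lam x 1)^2) ∧
      Real.sqrt ((u lam x 0)^2 + (u lam x 1)^2)
          ≤ C * Real.sqrt ((u lam a 0)^2 + (u lam a 1)^2) := by
  set K := ∫ t in a..c, δ⁻¹ * |gd t|
  have hK : 0 ≤ K := intervalIntegral.integral_nonneg hac.le fun t _ => by positivity
  have hδ_le : δ ≤ 1/2 := by linarith [abs_nonneg (g a), hgbd2 a ⟨le_rfl, hac.le⟩]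
  have hC : 1 ≤ Real.exp K / δ := by
    rw [le_div_iff₀ hδ]
    linarith [Real.add_one_le_exp K]
  refine ⟨√(Real.exp K / δ), Real.one_le_sqrt.mpr hC, fun lam x hx => ?_⟩
  have hsub : uIcc a c ⊆ uIcc 0 b := by
    rw [uIcc_of_le hac.le, uIcc_of_le hb.le]
    exact Icc_subset_Icc ha.le hcb
  obtain ⟨⟨hu₀, hu₀'⟩, hu₁, hu₁'⟩ :=
    canonical_system_hasDerivAt hb.le hgint hH (hucont lam) (hueq lam)
  have hgd : IntervalIntegrable gd volume a c :=
    (intervalIntegrable_iff_integrableOn_Icc_of_le hac.le).mpr hgdint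
  obtain ⟨hg, hg'⟩ := hgd.absolutelyContinuousOnInterval_of_eq_add_integral
    fun y hy => hgAC y (by rwa [uIcc_of_le hac.le] at hy)
  obtain ⟨hxa, hax⟩ := sum_sq_le_exp_integral_div_mul hδ hg (hu₀.mono hsub) (hu₁.mono hsub) hgd
    hg' (hu₀'.mono fun y hy hyI => hy (hsub hyI)) (hu₁'.mono fun y hy hyI => hy (hsub hyI))
    hgbd2 hx
  exact sqrt_comparable_of_le_mul (by positivity) hxa hax

/-- uniform comparability of the Prüfer radius. If `g` is
absolutely continuous on `[a,c] ⊂ (0,b]` with `|g| ≤ 1/2 - δ` there, then there is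
`C ≥ 1`, independent of `λ`, with `C⁻¹ ‖u(λ,a)‖ ≤ ‖u(λ,x)‖ ≤ C ‖u(λ,a)‖` on `[a,c]`,
`‖·‖` being the Euclidean norm on ℝ². -/
theorem pruefer_radius_comparable
    (b : ℝ) (hb : 0 < b)
    (g : ℝ → ℝ)
    (hgint : IntegrableOn g (Icc 0 b))
    (hgbd : ∀ᵐ x ∂volume, x ∈ Icc (0:ℝ) b → |g x| ≤ 1/2)
    (H : ℝ → Matrix (Fin 2) (Fin 2) ℝ)
    (hH : ∀ x, H x = !![1/2 + g x, 0; 0, 1/2 - g x])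
    (a c δ : ℝ) (ha : 0 < a) (hac : a < c) (hcb : c ≤ b) (hδ : 0 < δ)
    (gd : ℝ → ℝ) (hgdint : IntegrableOn gd (Icc a c))
    (hgAC : ∀ x ∈ Icc a c, g x = g a + ∫ s in a..x, gd s)
    (hgbd2 : ∀ x ∈ Icc a c, |g x| ≤ 1/2 - δ)
    (u : ℝ → ℝ → Fin 2 → ℝ)
    (hucont : ∀ lam, ContinuousOn (u lam) (Icc 0 b))
    (hueq : ∀ lam : ℝ, ∀ x ∈ Icc (0:ℝ) b,
      u lam x = ![1, 0] + lam • ∫ s in (0:ℝ)..x, (J2 * H s) *ᵥ u lam s) :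
    ∃ C : ℝ, 1 ≤ C ∧ ∀ lam : ℝ, ∀ x ∈ Icc a c,
      C⁻¹ * Real.sqrt ((u lam a 0)^2 + (u lam a 1)^2)
          ≤ Real.sqrt ((u lam x 0)^2 + (u lam x 1)^2) ∧
      Real.sqrt ((u lam x 0)^2 + (u lam x 1)^2)
          ≤ C * Real.sqrt ((u lam a 0)^2 + (u lam a 1)^2) :=
  pruefer_radius_comparable_general b hb g hgint H hH a c δ ha hac hcb hδ gd hgdint hgAC hgbd2 u
    hucont hueq
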